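/- Let H be a connected simple plane graph with minimum degree at least 3, let r ≥ 0 be an integer, let F be the set of faces of H and F' the set of faces of length at most r + 5. Then |F'| ≥ (r·|F| + 12)/(r + 3). -/

import Mathlib

/-- A loopless-or-not multigraph on vertex type `V` with edge type `E`:
each edge has a pair of endpoints. -/
structure Multigraph (V E : Type) where
  ends : E → Sym2 V

namespace Multigraph

variable {V E : Type}

/-- A multigraph is loopless if no edge has equal endpoints. -/
def Loopless (G : Multigraph V E) : Prop := ∀ e, ¬ (G.ends e).IsDiag

/-- The degree of a vertex: the number of edges incident with it. -/
noncomputable def degree (G : Multigraph V E) (v : V) : ℕ :=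
  Set.ncard {e : E | v ∈ G.ends e}

/-- Two (distinct) vertices are adjacent if some edge joins them. -/
def Adj (G : Multigraph V E) (u v : V) : Prop := u ≠ v ∧ ∃ e, G.ends e = s(u, v)

/-- One adjacency step avoiding a vertex set `A` and an edge set `S`. -/
def AdjAvoid (G : Multigraph V E) (A : Set V) (S : Set E) (u v : V) : Prop :=
  u ∉ A ∧ v ∉ A ∧ ∃ e, e ∉ S ∧ G.ends e = s(u, v)

/-- Reachability in the graph obtained by deleting the vertices `A` and edges `S`. -/
def Reach (G : Multigraph V E) (A : Set V) (S : Set E) : V → V → Prop :=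
  Relation.ReflTransGen (G.AdjAvoid A S)

/-- The graph minus the vertex set `A` is connected. -/
def ConnectedAvoiding (G : Multigraph V E) (A : Set V) : Prop :=
  ∀ u v : V, u ∉ A → v ∉ A → G.Reach A ∅ u v

def Connected (G : Multigraph V E) : Prop := G.ConnectedAvoiding ∅

def TwoConnected (G : Multigraph V E) : Prop :=
  3 ≤ Nat.card V ∧ ∀ x : V, G.ConnectedAvoiding {x}

/-- `{f, g}` is a 2-edge-cut: removing both destroys some reachability. -/
def IsTwoEdgeCut (G : Multigraph V E) (f g : E) : Prop :=
  f ≠ g ∧ ∃ u v : V, G.Reach ∅ ∅ u v ∧ ¬ G.Reach ∅ {f, g} u v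

/-- `{u, v}` is a 2-vertex-cut. -/
def IsVertexCut2 (G : Multigraph V E) (u v : V) : Prop :=
  u ≠ v ∧ ∃ x y : V, x ∉ ({u, v} : Set V) ∧ y ∉ ({u, v} : Set V) ∧ ¬ G.Reach {u, v} ∅ x y

/-- `K` is (the vertex set of) a connected component of `G − A`. -/
def IsCompAvoiding (G : Multigraph V E) (A : Set V) (K : Set V) : Prop :=
  ∃ x, x ∉ A ∧ K = {y | y ∉ A ∧ G.Reach A ∅ x y}

/-- `Z` is an anchor: no vertex of `Z` lies in a 2-vertex-cut, and every
nontrivial bridge (i.e. component of `G − {u,v}`) of every 2-vertex-cut `{u,v}`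
contains a vertex of `Z`. -/
def IsAnchor (G : Multigraph V E) (Z : Set V) : Prop :=
  (∀ z ∈ Z, ∀ u v : V, G.IsVertexCut2 u v → z ≠ u ∧ z ≠ v) ∧
  (∀ u v : V, G.IsVertexCut2 u v → ∀ K : Set V, G.IsCompAvoiding {u, v} K → ∃ z ∈ Z, z ∈ K)

/-- A (simple) path from `u` to `v` in a multigraph: a list of pairwise distinct
vertices together with the list of edges joining the consecutive vertices. -/
structure MPath (G : Multigraph V E) (u v : V) where
  verts : List V
  edges : List E
  len_eq : verts.length = edges.length + 1
  head_eq : verts.head? = some u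
  last_eq : verts.getLast? = some v
  ends_eq : ∀ i : ℕ, (hi : i < edges.length) →
    G.ends (edges.get ⟨i, hi⟩) =
      s(verts.get ⟨i, by omega⟩, verts.get ⟨i + 1, by omega⟩)
  vnodup : verts.Nodup
  enodup : edges.Nodup

/-- The internal vertices of a path: all vertices but the two endpoints. -/
def MPath.internal {G : Multigraph V E} {u v : V} (p : G.MPath u v) : List V :=
  (p.verts.drop 1).dropLast

/-- A branch: a nontrivial path whose endpoints have degree at least 3 and
whose internal vertices have degree 2. -/
def IsBranchPath (G : Multigraph V E) {u v : V} (p : G.MPath u v) : Prop :=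
  p.edges ≠ [] ∧ 3 ≤ G.degree u ∧ 3 ≤ G.degree v ∧ ∀ w ∈ p.internal, G.degree w = 2

/-- The edge sets of branches with both endpoints in `B` (a branch is determined,
up to reversal, by its edge set). -/
def branchSets (G : Multigraph V E) (B : Set V) : Set (Set E) :=
  {S | ∃ u v, u ∈ B ∧ v ∈ B ∧ ∃ p : G.MPath u v, G.IsBranchPath p ∧ {e | e ∈ p.edges} = S}

/-- An `(ℓ, Δ)`-earring: a base edge `uv` plus two distinct `uv`-paths avoiding the
base edge, of length at most `ℓ`, with internal vertices of degree `< Δ`, and such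
that every common edge `f` of the two paths makes `{base, f}` a 2-edge-cut. -/
structure Earring (G : Multigraph V E) (ℓ Δ : ℕ) where
  base : E
  u : V
  v : V
  une : u ≠ v
  ends_base : G.ends base = s(u, v)
  P : G.MPath u v
  Q : G.MPath u v
  PQ_distinct : P.verts ≠ Q.verts ∨ P.edges ≠ Q.edges
  base_not_P : base ∉ P.edges
  base_not_Q : base ∉ Q.edges
  lenP : P.edges.length ≤ ℓ
  lenQ : Q.edges.length ≤ ℓ
  degP : ∀ w ∈ P.internal, G.degree w < Δ
  degQ : ∀ w ∈ Q.internal, G.degree w < Δ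
  common_cut : ∀ f, f ∈ P.edges → f ∈ Q.edges → G.IsTwoEdgeCut base f

def Earring.edgeSet {G : Multigraph V E} {ℓ Δ : ℕ} (X : G.Earring ℓ Δ) : Set E :=
  {X.base} ∪ {e | e ∈ X.P.edges} ∪ {e | e ∈ X.Q.edges}

def Earring.vertexSet {G : Multigraph V E} {ℓ Δ : ℕ} (X : G.Earring ℓ Δ) : Set V :=
  {w | w ∈ X.P.verts ∨ w ∈ X.Q.verts}

/-- A drawing of a multigraph in the plane: an injective placement of the vertices
together with, for each edge, a simple arc joining the placements of its endpoints,
whose interior avoids all vertices. -/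
structure Drawing (G : Multigraph V E) where
  vpos : V → ℝ × ℝ
  arc : E → ℝ → ℝ × ℝ
  vpos_inj : Function.Injective vpos
  arc_cont : ∀ e, ContinuousOn (arc e) (Set.Icc 0 1)
  arc_inj : ∀ e, Set.InjOn (arc e) (Set.Icc 0 1)
  arc_ends : ∀ e, ∃ x y : V, G.ends e = s(x, y) ∧ arc e 0 = vpos x ∧ arc e 1 = vpos y
  arc_avoid : ∀ e, ∀ t ∈ Set.Ioo (0:ℝ) 1, ∀ x : V, arc e t ≠ vpos x

/-- The (doubly counted) set of crossings of a drawing: interior points where two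
distinct edges meet. -/
def Drawing.CrossSet {G : Multigraph V E} (D : G.Drawing) : Set ((E × E) × ℝ × ℝ) :=
  {q | q.1.1 ≠ q.1.2 ∧ q.2.1 ∈ Set.Ioo (0:ℝ) 1 ∧ q.2.2 ∈ Set.Ioo (0:ℝ) 1 ∧
    D.arc q.1.1 q.2.1 = D.arc q.1.2 q.2.2}

/-- A good drawing: one with finitely many crossings. -/
structure GoodDrawing (G : Multigraph V E) extends G.Drawing where
  finCross : toDrawing.CrossSet.Finite

/-- The number of crossings of a good drawing (each crossing is recorded twice
in `CrossSet`). -/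
noncomputable def GoodDrawing.crossings {G : Multigraph V E} (D : G.GoodDrawing) : ℕ :=
  D.toDrawing.CrossSet.ncard / 2

/-- The crossing number: the least number of crossings of a drawing. -/
noncomputable def crNum (G : Multigraph V E) : ℕ :=
  sInf {n : ℕ | ∃ D : G.GoodDrawing, D.crossings = n}

/-- A multigraph is planar if it has a crossing-free drawing. -/
def IsPlanar (G : Multigraph V E) : Prop := ∃ D : G.Drawing, D.CrossSet = ∅

/-- Deleting a set of edges. -/
def delete (G : Multigraph V E) (S : Set E) : Multigraph V {e : E // e ∉ S} :=
  ⟨fun e => G.ends e.1⟩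

/-- The image (point set) of a drawing in the plane. -/
def Drawing.image {G : Multigraph V E} (D : G.Drawing) : Set (ℝ × ℝ) :=
  Set.range D.vpos ∪ ⋃ e : E, D.arc e '' Set.Icc 0 1

/-- The faces of a drawing: the connected components of the complement of its image. -/
def Drawing.Faces {G : Multigraph V E} (D : G.Drawing) : Set (Set (ℝ × ℝ)) :=
  {C | ∃ p ∉ D.image, C = connectedComponentIn D.imageᶜ p}

/-- A vertex is incident with a face if its placement lies on the face's closure. -/
def Drawing.FaceIncident {G : Multigraph V E} (D : G.Drawing) (x : V) (C : Set (ℝ × ℝ)) :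
    Prop := D.vpos x ∈ closure C

/-- The weighted number of crossings of a good drawing. -/
noncomputable def GoodDrawing.wcross {G : Multigraph V E} (D : G.GoodDrawing)
    (w : E → ℝ) : ℝ :=
  (∑ q ∈ D.finCross.toFinset, w q.1.1 * w q.1.2) / 2

/-- The weighted crossing number of `(G, w)`. -/
noncomputable def wcr (G : Multigraph V E) (w : E → ℝ) : ℝ :=
  sInf {x : ℝ | ∃ D : G.GoodDrawing, D.wcross w = x}

end Multigraph

/-- The uniform probability measure on `[0,1]^E`, modelling i.i.d. uniform `[0,1]`
weights on the edges. -/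
noncomputable def cubeMeasure (E : Type) [Fintype E] : MeasureTheory.Measure (E → ℝ) :=
  (MeasureTheory.volume : MeasureTheory.Measure (E → ℝ)).restrict
    {w | ∀ e, w e ∈ Set.Icc (0:ℝ) 1}

/-- A combinatorial map (graph embedded in an orientable surface), given by the
rotation permutation `σ` and the fixed-point-free edge involution `α` on darts. -/
structure CombMap (D : Type) [Fintype D] where
  σ : Equiv.Perm D
  α : Equiv.Perm D
  α_invol : ∀ d, α (α d) = d
  α_ne : ∀ d, α d ≠ d

namespace CombMap

variable {D : Type} [Fintype D] (M : CombMap D)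

/-- Darts in the same `σ`-orbit emanate from the same vertex. -/
def vSetoid : Setoid D :=
  ⟨M.σ.SameCycle, ⟨fun _ => Equiv.Perm.SameCycle.refl _ _, fun h => h.symm,
    fun h h' => h.trans h'⟩⟩

def Vertices := Quotient M.vSetoid

def vmk (d : D) : M.Vertices := Quotient.mk M.vSetoid d

/-- The face permutation. -/
def φ : Equiv.Perm D := M.σ * M.α

/-- Darts in the same `φ`-orbit lie on the same face. -/
def fSetoid : Setoid D :=
  ⟨M.φ.SameCycle, ⟨fun _ => Equiv.Perm.SameCycle.refl _ _, fun h => h.symm,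
    fun h h' => h.trans h'⟩⟩

def Faces := Quotient M.fSetoid

def fmk (d : D) : M.Faces := Quotient.mk M.fSetoid d

/-- The degree of the vertex at a dart `d`: the number of darts at that vertex. -/
noncomputable def degreeD (d : D) : ℕ := Set.ncard {d' | M.σ.SameCycle d d'}

/-- The length of the face at a dart `d`: the length of its boundary walk. -/
noncomputable def faceLenD (d : D) : ℕ := Set.ncard {d' | M.φ.SameCycle d d'}

noncomputable def nV : ℕ := Nat.card M.Vertices
noncomputable def nF : ℕ := Nat.card M.Faces
noncomputable def nE (_M : CombMap D) : ℕ := Fintype.card D / 2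

/-- Connectedness of the map. -/
def Conn : Prop :=
  ∀ d d' : D, Relation.ReflTransGen (fun a b => b = M.σ a ∨ b = M.α a) d d'

/-- Euler's formula with characteristic 2: the map is an embedding in the plane
(sphere). -/
def EulerPlanar : Prop := (M.nV : ℤ) + M.nF = M.nE + 2

/-- No loops. -/
def NoLoops : Prop := ∀ d, ¬ M.σ.SameCycle d (M.α d)

/-- Simple: no loops and no parallel edges. -/
def Simple : Prop := M.NoLoops ∧
  ∀ d d', M.σ.SameCycle d d' → M.σ.SameCycle (M.α d) (M.α d') → d' = d

/-- Two darts lie on the same edge iff they are equal or `α`-related. -/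
def eSetoid : Setoid D :=
  ⟨fun d d' => d' = d ∨ d' = M.α d, by
    refine ⟨fun d => Or.inl rfl, ?_, ?_⟩
    · rintro x y (rfl | rfl)
      · exact Or.inl rfl
      · exact Or.inr (M.α_invol x).symm
    · rintro x y z (rfl | rfl) (rfl | rfl)
      · exact Or.inl rfl
      · exact Or.inr rfl
      · exact Or.inr rfl
      · exact Or.inl (M.α_invol x)⟩

def Edges := Quotient M.eSetoid

def emk (d : D) : M.Edges := Quotient.mk M.eSetoid d

/-- The underlying multigraph of a combinatorial map. -/
def toMultigraph : Multigraph M.Vertices M.Edges :=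
  ⟨Quotient.lift (fun d => s(M.vmk d, M.vmk (M.α d))) (by
    rintro d d' (rfl | rfl)
    · rfl
    · show s(M.vmk d, M.vmk (M.α d)) = s(M.vmk (M.α d), M.vmk (M.α (M.α d)))
      rw [M.α_invol]
      exact Sym2.eq_swap)⟩

/-- The dual map: faces become vertices. -/
def dual : CombMap D := ⟨M.φ, M.α, M.α_invol, M.α_ne⟩

/-- The set of parallel edges joining `u` and `v`. -/
def parallels (u v : M.Vertices) : Set M.Edges :=
  {e | M.toMultigraph.ends e = s(u, v)}

/-- Cleanness of the embedding: each class of `k ≥ 2` pairwise parallel edges is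
drawn consecutively, i.e. bounds `k − 1` faces of length 2 consisting solely of
edges of the class. -/
def IsClean : Prop :=
  ∀ u v : M.Vertices, u ≠ v → 2 ≤ (M.parallels u v).ncard →
    Set.ncard {f : M.Faces | ∃ d, M.fmk d = f ∧ M.faceLenD d = 2 ∧
      ∀ d', M.φ.SameCycle d d' → M.emk d' ∈ M.parallels u v} =
      (M.parallels u v).ncard - 1

end CombMap

/-! A face of length at most 2 would need a loop, a pair of parallel edges or a vertex of
degree 1, so every face has length at least 3. Summing face lengths over the `s` short and the
`|F| - s` long faces gives `3 s + (r + 6)(|F| - s) ≤ 2|E|`, while Euler's formula together with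
`3|V| ≤ 2|E|` gives `2|E| ≤ 6|F| - 12`; eliminating `2|E|` yields `(r + 3) s ≥ r|F| + 12`. -/

theorem Fintype.sum_le_card_of_le_ncard_fiber {α β : Type*} [Fintype α] [Fintype β]
    {f : α → β} (hf : Function.Surjective f) (w : β → ℕ)
    (hw : ∀ a, w (f a) ≤ {a' | f a' = f a}.ncard) :
    ∑ b, w b ≤ Fintype.card α := by
  classical
  rw [← Finset.card_univ,
    Finset.card_eq_sum_card_fiberwise (f := f) (t := Finset.univ) (by simp)]
  gcongr with b
  obtain ⟨a, rfl⟩ := hf b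
  refine (hw a).trans_eq ?_
  rw [← Set.ncard_coe_finset]
  simp

theorem Setoid.ncard_setOf_mk_eq {α : Type*} (S : Setoid α) (a : α) :
    {b | Quotient.mk S b = Quotient.mk S a}.ncard = {b | S a b}.ncard := by
  congr 1
  ext b
  exact Quotient.eq.trans S.comm'

namespace CombMap

open Finset

variable {D : Type} [Fintype D] (M : CombMap D)

noncomputable instance : Fintype M.Vertices := by classical exact Quotient.fintype _

noncomputable instance : Fintype M.Faces := by classical exact Quotient.fintype _

theorem two_mul_nE : 2 * M.nE = Fintype.card D := by
  classical
  have hsq : M.α ^ 2 ^ 1 = 1 := Equiv.ext M.α_invol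
  have hsupport : M.α.supportᶜ = ∅ := by
    ext d
    simpa using M.α_ne d
  have hmod := Equiv.Perm.card_compl_support_modEq hsq
  rw [hsupport, card_empty] at hmod
  exact Nat.mul_div_cancel' (Nat.modEq_zero_iff_dvd.mp hmod.symm)

theorem mul_nV_le_card {k : ℕ} (hdeg : ∀ d, k ≤ M.degreeD d) :
    k * M.nV ≤ Fintype.card D := by
  have := Fintype.sum_le_card_of_le_ncard_fiber (f := M.vmk) Quotient.mk_surjective
    (fun _ => k) fun d => (hdeg d).trans_eq (M.vSetoid.ncard_setOf_mk_eq d).symm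
  rwa [Finset.sum_const, Finset.card_univ, smul_eq_mul, mul_comm, ← Nat.card_eq_fintype_card]
    at this

theorem card_add_twelve_le (heuler : M.EulerPlanar) (hdeg : ∀ d, 3 ≤ M.degreeD d) :
    Fintype.card D + 12 ≤ 6 * M.nF := by
  have hE := M.two_mul_nE
  have hV := M.mul_nV_le_card hdeg
  unfold EulerPlanar at heuler
  omega

theorem φ_ne_self (hloops : M.NoLoops) (d : D) : M.φ d ≠ d := fun h =>
  hloops d ⟨-1, by rw [zpow_neg_one, Equiv.Perm.inv_eq_iff_eq]; exact h.symm⟩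

theorem degreeD_eq_one_of_fixed {d : D} (hd : M.σ d = d) : M.degreeD d = 1 := by
  rw [degreeD, Set.ncard_eq_one]
  exact ⟨d, Set.ext fun d' => ⟨fun h => (h.eq_of_left hd).symm, fun h => h ▸ .refl _ _⟩⟩

theorem φ_φ_ne_self (hs : M.Simple) (hdeg : ∀ d, 2 ≤ M.degreeD d) (d : D) :
    M.φ (M.φ d) ≠ d := by
  intro h
  have hd : M.σ.SameCycle (M.α d) (M.φ d) := ⟨1, rfl⟩
  have hφd : M.σ.SameCycle (M.α (M.α d)) (M.α (M.φ d)) := by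
    rw [M.α_invol]
    exact ⟨-1, by rw [zpow_neg_one, Equiv.Perm.inv_eq_iff_eq]; exact h.symm⟩
  -- `α d` and `φ d` both join the vertex of `φ d` to that of `d`, so simplicity identifies them
  have hback : M.φ d = M.α d := hs.2 _ _ hd hφd
  have := M.degreeD_eq_one_of_fixed (d := M.α d) hback
  have := hdeg (M.α d)
  omega

theorem three_le_faceLenD (hs : M.Simple) (hdeg : ∀ d, 2 ≤ M.degreeD d) (d : D) :
    3 ≤ M.faceLenD d := by
  have h1 := M.φ_ne_self hs.1 d
  have h2 := M.φ_φ_ne_self hs hdeg d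
  have h12 : M.φ (M.φ d) ≠ M.φ d := fun h => h1 (M.φ.injective h)
  have horbit : ({d, M.φ d, M.φ (M.φ d)} : Set D) ⊆ {d' | M.φ.SameCycle d d'} := by
    rintro x (rfl | rfl | rfl)
    exacts [.refl _ _, ⟨1, rfl⟩, ⟨2, rfl⟩]
  calc 3 = ({d, M.φ d, M.φ (M.φ d)} : Set D).ncard :=
        (Set.ncard_eq_three.mpr ⟨_, _, _, h1.symm, h2.symm, h12.symm, rfl⟩).symm
    _ ≤ M.faceLenD d := Set.ncard_le_ncard horbit (Set.toFinite _)

def shortFaces (ℓ : ℕ) : Set M.Faces := {f | ∃ d, M.fmk d = f ∧ M.faceLenD d ≤ ℓ}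

theorem mul_ncard_shortFaces_add_le_card {g ℓ : ℕ} (hg : ∀ d, g ≤ M.faceLenD d) :
    g * (M.shortFaces ℓ).ncard + (ℓ + 1) * (M.nF - (M.shortFaces ℓ).ncard) ≤
      Fintype.card D := by
  classical
  have hw : ∀ d, (if M.fmk d ∈ M.shortFaces ℓ then g else ℓ + 1) ≤ M.faceLenD d := by
    intro d
    split_ifs with hd
    · exact hg d
    · exact Nat.lt_of_not_le fun h => hd ⟨d, rfl, h⟩
  have := Fintype.sum_le_card_of_le_ncard_fiber (f := M.fmk) Quotient.mk_surjective
    (fun f => if f ∈ M.shortFaces ℓ then g else ℓ + 1)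
    fun d => (hw d).trans_eq (M.fSetoid.ncard_setOf_mk_eq d).symm
  rw [Finset.sum_ite, Finset.sum_const, Finset.sum_const, smul_eq_mul, smul_eq_mul] at this
  have hcard : M.nF = #{f | f ∈ M.shortFaces ℓ} + #{f | f ∉ M.shortFaces ℓ} := by
    rw [Finset.card_filter_add_card_filter_not, Finset.card_univ]
    exact Nat.card_eq_fintype_card
  have hshort : (M.shortFaces ℓ).ncard = #{f | f ∈ M.shortFaces ℓ} := by
    rw [← Set.ncard_coe_finset]
    simp
  rw [hcard, hshort, Nat.add_sub_cancel_left]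
  linarith

end CombMap

theorem statement2_general {D : Type} [Fintype D] (M : CombMap D)
    (heuler : M.EulerPlanar) (hsimple : M.Simple)
    (hdeg : ∀ d : D, 3 ≤ M.degreeD d) (r : ℕ) :
    ((r : ℝ) * (M.nF : ℝ) + 12) / ((r : ℝ) + 3) ≤
      (Set.ncard {f : M.Faces | ∃ d, M.fmk d = f ∧ M.faceLenD d ≤ r + 5} : ℝ) := by
  change _ ≤ ((M.shortFaces (r + 5)).ncard : ℝ)
  have hfaces := M.mul_ncard_shortFaces_add_le_card (ℓ := r + 5)
    (M.three_le_faceLenD hsimple fun d => (hdeg d).trans' (by norm_num))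
  have heuler' := M.card_add_twelve_le heuler hdeg
  set s := (M.shortFaces (r + 5)).ncard
  obtain ⟨t, hst⟩ : ∃ t, M.nF = s + t := Nat.exists_eq_add_of_le (Set.ncard_le_card _)
  rw [hst, Nat.add_sub_cancel_left] at hfaces
  rw [hst] at heuler'
  have hcount : r * M.nF + 12 ≤ (r + 3) * s := by
    rw [hst]
    nlinarith
  rw [div_le_iff₀ (by positivity)]
  exact_mod_cast hcount.trans_eq (mul_comm _ _)

/-- In a connected simple plane graph with minimum degree at least 3,
at least `(r·|F| + 12)/(r + 3)` of the `|F|` faces have length at most `r + 5`. -/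
theorem statement2 {D : Type} [Fintype D] (M : CombMap D)
    (hconn : M.Conn) (heuler : M.EulerPlanar) (hsimple : M.Simple)
    (hdeg : ∀ d : D, 3 ≤ M.degreeD d) (r : ℕ) :
    ((r : ℝ) * (M.nF : ℝ) + 12) / ((r : ℝ) + 3) ≤
      (Set.ncard {f : M.Faces | ∃ d, M.fmk d = f ∧ M.faceLenD d ≤ r + 5} : ℝ) :=
  statement2_general M heuler hsimple hdeg r
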